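/- arXiv:1703.07337 — 4 statements merged into one kernel-verified Lean document; each statement's English description precedes it below -/
import Mathlib

section
/- Let λ₁ ≥ λ₂ ≥ ⋯ ≥ λₙ and ρ₁ ≤ ρ₂ ≤ ⋯ ≤ ρₙ be real numbers. Then ∑_{i≠j} (|λ_i − λ_j| + |ρ_i − ρ_j|) ≤ 2 ∑_{i=1}^n ∑_{j=1}^n |λ_i + ρ_j|. -/
open Finset

/-- For `i ≤ j` the two differences have signs making the left side `(l i + r j) - (l j + r i)`. -/
theorem abs_sub_add_abs_sub_le_abs_add_add_abs_add {α β : Type*} [LinearOrder α]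
    [AddCommGroup β] [LinearOrder β] [IsOrderedAddMonoid β] {l r : α → β}
    (hl : Antitone l) (hr : Monotone r) (i j : α) :
    |l i - l j| + |r i - r j| ≤ |l i + r j| + |l j + r i| := by
  wlog hij : i ≤ j generalizing i j
  · rw [abs_sub_comm (l i), abs_sub_comm (r i), add_comm |l i + r j|]
    exact this j i (le_of_not_ge hij)
  rw [abs_of_nonneg (sub_nonneg.2 (hl hij)), abs_of_nonpos (sub_nonpos.2 (hr hij))]
  calc l i - l j + -(r i - r j) = (l i + r j) - (l j + r i) := by abel
    _ ≤ |(l i + r j) - (l j + r i)| := le_abs_self _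
    _ ≤ |l i + r j| + |l j + r i| := abs_sub _ _

theorem stmt_2 (n : ℕ) (l r : Fin n → ℝ)
    (hl : ∀ i j : Fin n, i ≤ j → l j ≤ l i)
    (hr : ∀ i j : Fin n, i ≤ j → r i ≤ r j) :
    ∑ p ∈ Finset.univ.filter (fun p : Fin n × Fin n => p.1 ≠ p.2),
        (|l p.1 - l p.2| + |r p.1 - r p.2|)
      ≤ 2 * ∑ i : Fin n, ∑ j : Fin n, |l i + r j| := by
  calc ∑ p ∈ univ.filter (fun p : Fin n × Fin n => p.1 ≠ p.2),
        (|l p.1 - l p.2| + |r p.1 - r p.2|)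
      ≤ ∑ p ∈ univ.filter (fun p : Fin n × Fin n => p.1 ≠ p.2),
        (|l p.1 + r p.2| + |l p.2 + r p.1|) :=
        sum_le_sum fun p _ => abs_sub_add_abs_sub_le_abs_add_add_abs_add hl hr p.1 p.2
    _ ≤ ∑ p : Fin n × Fin n, (|l p.1 + r p.2| + |l p.2 + r p.1|) :=
        sum_le_sum_of_subset_of_nonneg (filter_subset _ _) fun _ _ _ => by positivity
    _ = 2 * ∑ i : Fin n, ∑ j : Fin n, |l i + r j| := by
        rw [Fintype.sum_prod_type]
        simp only [sum_add_distrib]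
        rw [sum_comm (f := fun i j => |l j + r i|), two_mul]
end

section
/- If f₁,…,fₙ are functions of a real (or complex) variable each differentiable n−1 times at a point α, then the limit of det(f_i(α_j))_{1≤i,j≤n} / ∏_{1≤i<j≤n}(α_j − α_i) as all α₁,…,αₙ tend to α equals det(f_i^{(j−1)}(α))_{1≤i,j≤n} / ∏_{j=1}^n (j−1)!. -/
/-!
Dividing column `k` of `det (f i (α j))` by `∏ l < k, (α k - α l)` after subtracting suitable
multiples of the earlier columns (an upper triangular column operation) turns the quotient into
the determinant of the divided differences `f i [α 0, …, α k]`. Applying Rolle's theorem `k` times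
to `f` minus its interpolating polynomial shows `f [α 0, …, α k] = f⁽ᵏ⁾ ξ / k!` for some `ξ` near
the nodes, so each entry tends to `f⁽ᵏ⁾ α / k!` by continuity of `f⁽ᵏ⁾`, and the determinant
follows by continuity of `det`.
-/

open Finset Filter

theorem ContDiffOn.continuousOn_iteratedDeriv_of_isOpen {𝕜 F : Type*} [NontriviallyNormedField 𝕜]
    [NormedAddCommGroup F] [NormedSpace 𝕜 F] {f : 𝕜 → F} {s : Set 𝕜} {n : WithTop ℕ∞} {m : ℕ}
    (hf : ContDiffOn 𝕜 n f s) (hmn : m ≤ n) (hs : IsOpen s) :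
    ContinuousOn (iteratedDeriv m f) s :=
  (hf.continuousOn_iteratedDerivWithin hmn hs.uniqueDiffOn).congr
    (iteratedDerivWithin_of_isOpen hs).symm

theorem exists_finset_deriv_eq_zero {u : Set ℝ} (hu : u.OrdConnected) {g : ℝ → ℝ}
    (hg : ContinuousOn g u) {s : Finset ℝ} (hsu : ↑s ⊆ u) (hs : ∀ x ∈ s, g x = 0) :
    ∃ t : Finset ℝ, #s ≤ #t + 1 ∧ ↑t ⊆ u ∧ ∀ x ∈ t, deriv g x = 0 := by
  have hrolle : ∀ x y, ∃ z, x ∈ s → y ∈ s → x < y → z ∈ Set.Ioo x y ∧ deriv g z = 0 := by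
    intro x y
    by_cases h : x ∈ s ∧ y ∈ s ∧ x < y
    · obtain ⟨hx, hy, hxy⟩ := h
      obtain ⟨z, hz, hz'⟩ := exists_deriv_eq_zero hxy
        (hg.mono (hu.out (hsu hx) (hsu hy))) ((hs x hx).trans (hs y hy).symm)
      exact ⟨z, fun _ _ _ => ⟨hz, hz'⟩⟩
    · exact ⟨x, fun hx hy hxy => absurd ⟨hx, hy, hxy⟩ h⟩
  choose z hz using hrolle
  classical
  let pairs := (s ×ˢ s).filter fun p => p.1 < p.2
  have hcrit : ∀ w ∈ pairs.image fun p => z p.1 p.2, w ∈ u ∧ deriv g w = 0 := by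
    intro w hw
    obtain ⟨⟨x, y⟩, hp, rfl⟩ := mem_image.1 hw
    simp only [pairs, mem_filter, mem_product] at hp
    obtain ⟨hzxy, hzero⟩ := hz x y hp.1.1 hp.1.2 hp.2
    exact ⟨hu.out (hsu hp.1.1) (hsu hp.1.2) (Set.Ioo_subset_Icc_self hzxy), hzero⟩
  refine ⟨pairs.image fun p => z p.1 p.2, ?_, fun w hw => (hcrit w hw).1,
    fun w hw => (hcrit w hw).2⟩
  refine card_le_of_interleaved fun x hx y hy hxy _ => ⟨z x y, ?_, (hz x y hx hy hxy).1⟩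
  exact mem_image.2 ⟨(x, y), by simp [pairs, hx, hy, hxy], rfl⟩

theorem exists_finset_iteratedDeriv_eq_zero {u : Set ℝ} (hu : u.OrdConnected) {g : ℝ → ℝ}
    {j : ℕ} (hg : ∀ m < j, ContinuousOn (iteratedDeriv m g) u) {s : Finset ℝ} (hsu : ↑s ⊆ u)
    (hs : ∀ x ∈ s, g x = 0) :
    ∃ t : Finset ℝ, #s ≤ #t + j ∧ ↑t ⊆ u ∧ ∀ x ∈ t, iteratedDeriv j g x = 0 := by
  induction j with
  | zero => exact ⟨s, le_rfl, hsu, hs⟩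
  | succ j ih =>
    obtain ⟨t, hst, htu, ht⟩ := ih fun m hm => hg m (by omega)
    obtain ⟨t', htt', ht'u, ht'⟩ := exists_finset_deriv_eq_zero hu (hg j j.lt_succ_self) htu ht
    refine ⟨t', by omega, ht'u, fun x hx => ?_⟩
    rw [iteratedDeriv_succ]
    exact ht' x hx

section

open Polynomial

theorem Polynomial.iteratedDeriv_eval {𝕜 : Type*} [NontriviallyNormedField 𝕜] (p : 𝕜[X])
    (m : ℕ) : iteratedDeriv m (fun x => p.eval x) = fun x => (derivative^[m] p).eval x := by
  induction m with
  | zero => rfl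
  | succ m ih =>
    ext x
    rw [iteratedDeriv_succ, ih, Function.iterate_succ_apply', Polynomial.deriv]

theorem Polynomial.iteratedDeriv_eval_of_natDegree_le {𝕜 : Type*} [NontriviallyNormedField 𝕜]
    {p : 𝕜[X]} {j : ℕ} (hp : p.natDegree ≤ j) (x : 𝕜) :
    iteratedDeriv j (fun x => p.eval x) x = j.factorial * p.coeff j := by
  have hdeg : (derivative^[j] p).natDegree = 0 := by
    have := natDegree_iterate_derivative p j
    omega
  rw [congrFun (iteratedDeriv_eval p j) x, eq_C_of_natDegree_eq_zero hdeg, eval_C,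
    coeff_iterate_derivative, zero_add, Nat.descFactorial_self, nsmul_eq_mul]

noncomputable def dividedDifference {ι K : Type*} [DecidableEq ι] [Field K] (s : Finset ι)
    (v : ι → K) (f : K → K) : K :=
  ∑ i ∈ s, f (v i) / ∏ j ∈ s.erase i, (v i - v j)

theorem exists_dividedDifference_eq_iteratedDeriv_div_factorial {ι : Type*} [DecidableEq ι]
    {u : Set ℝ} (hu : IsOpen u) (hu' : u.OrdConnected) {f : ℝ → ℝ} {j : ℕ} (hf : ContDiffOn ℝ j f u)
    {s : Finset ι} {v : ι → ℝ} (hv : Set.InjOn v s) (hvu : ∀ i ∈ s, v i ∈ u) (hs : #s = j + 1) :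
    ∃ ξ ∈ u, dividedDifference s v f = iteratedDeriv j f ξ / j.factorial := by
  set p := Lagrange.interpolate s v (f ∘ v)
  have hp_deg : p.degree < #s := Lagrange.degree_interpolate_lt _ hv
  have hp_natDeg : p.natDegree ≤ j := by
    rw [hs] at hp_deg
    exact natDegree_le_iff_degree_le.2 (Order.le_of_lt_succ hp_deg)
  have hp_coeff : p.coeff j = dividedDifference s v f := by
    rw [show j = #s - 1 by omega, Lagrange.coeff_eq_sum hv hp_deg]
    refine sum_congr rfl fun i hi => ?_
    rw [Lagrange.eval_interpolate_at_node _ hv hi, Function.comp_apply]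
  have hp_smooth : ContDiff ℝ j fun x => p.eval x := by simpa using p.contDiff_aeval (𝕜 := ℝ) j
  -- `f - p` vanishes at the `j + 1` nodes, so its `j`-th derivative vanishes somewhere in `u`.
  have hg : ContDiffOn ℝ j (fun x => f x - p.eval x) u := hf.sub hp_smooth.contDiffOn
  obtain ⟨t, hst, htu, ht⟩ := exists_finset_iteratedDeriv_eq_zero (s := s.image v) hu'
    (fun m hm => hg.continuousOn_iteratedDeriv_of_isOpen (by exact_mod_cast hm.le) hu)
    (by simpa [Set.subset_def] using hvu)
    (by simpa using fun i hi => by rw [Lagrange.eval_interpolate_at_node _ hv hi]; exact sub_self _)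
  rw [card_image_of_injOn hv, hs] at hst
  obtain ⟨ξ, hξ⟩ := card_pos.1 (by omega : 0 < #t)
  have hξu : ξ ∈ u := htu hξ
  refine ⟨ξ, hξu, ?_⟩
  have hξ_zero := ht ξ hξ
  rw [iteratedDeriv_fun_sub (hf.contDiffAt (hu.mem_nhds hξu)) hp_smooth.contDiffAt,
    iteratedDeriv_eval_of_natDegree_le hp_natDeg, hp_coeff, sub_eq_zero] at hξ_zero
  rw [hξ_zero]
  field_simp

end

theorem tendsto_dividedDifference {ι : Type*} [DecidableEq ι] {s : Finset ι} {f : ℝ → ℝ}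
    {a : ℝ} {j : ℕ} (hs : #s = j + 1) (hf : ContDiffAt ℝ j f a) :
    Tendsto (fun v : ι → ℝ => dividedDifference s v f)
      (nhdsWithin (fun _ => a) {v | Set.InjOn v s})
      (nhds (iteratedDeriv j f a / j.factorial)) := by
  obtain ⟨u, hu, hfu⟩ := hf.contDiffOn le_rfl (by simp)
  obtain ⟨δ₀, hδ₀, hball⟩ := Metric.mem_nhds_iff.1 hu
  have hcont : ContinuousAt (fun x => iteratedDeriv j f x / j.factorial) a :=
    ((hfu.mono hball).continuousOn_iteratedDeriv_of_isOpen le_rfl Metric.isOpen_ball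
      |>.continuousAt (Metric.ball_mem_nhds a hδ₀)).div_const _
  rw [Metric.tendsto_nhds]
  intro ε hε
  obtain ⟨δ, hδ, hδε⟩ := Metric.continuousAt_iff.1 hcont ε hε
  have hnear : ∀ᶠ v : ι → ℝ in nhds (fun _ => a), ∀ i ∈ s, v i ∈ Metric.ball a (min δ δ₀) :=
    (eventually_all_finset s).2 fun i _ =>
      (continuous_apply i).continuousAt.preimage_mem_nhds (Metric.ball_mem_nhds a (by positivity))
  filter_upwards [nhdsWithin_le_nhds hnear, self_mem_nhdsWithin] with v hv hinj
  obtain ⟨ξ, hξ, hdd⟩ :=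
    exists_dividedDifference_eq_iteratedDeriv_div_factorial Metric.isOpen_ball
      (by rw [Real.ball_eq_Ioo]; exact Set.ordConnected_Ioo)
    ((hfu.mono hball).mono (Metric.ball_subset_ball (min_le_right _ _))) hinj hv hs
  rw [hdd]
  exact hδε (lt_of_lt_of_le hξ (min_le_left _ _))

theorem prod_filter_lt_eq_prod_prod_Iio {α M : Type*} [Fintype α] [LinearOrder α]
    [LocallyFiniteOrderBot α] [CommMonoid M] (g : α → α → M) :
    ∏ p ∈ univ.filter (fun p : α × α => p.1 < p.2), g p.1 p.2 = ∏ k, ∏ l ∈ Iio k, g l k := by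
  rw [prod_filter, Fintype.prod_prod_type, Finset.prod_comm]
  refine prod_congr rfl fun k _ => ?_
  rw [← prod_filter, filter_gt_eq_Iio]

theorem Matrix.det_of_apply_div_prod_sub_eq_det_dividedDifference {α K : Type*} [Fintype α]
    [LinearOrder α] [LocallyFiniteOrderBot α] [Field K] (f : α → K → K) (v : α → K) :
    det (of fun i j => f i (v j)) / ∏ p ∈ univ.filter (fun p : α × α => p.1 < p.2), (v p.2 - v p.1)
      = det (of fun i k => dividedDifference (Iic k) v (f i)) := by
  let L : Matrix α α K :=
    of fun m k => if m ≤ k then (∏ l ∈ (Iic k).erase m, (v m - v l))⁻¹ else 0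
  have hL : (of fun i k => dividedDifference (Iic k) v (f i)) = of (fun i j => f i (v j)) * L := by
    ext i k
    simp only [dividedDifference, mul_apply, of_apply, L, mul_ite, mul_zero, ← sum_filter,
      div_eq_mul_inv]
    congr 1
    ext m
    simp
  have hL_det : L.det = ∏ k, (∏ l ∈ Iio k, (v k - v l))⁻¹ := by
    rw [Matrix.det_of_isUpperTriangular (M := L) fun i j hij => if_neg (not_le.2 hij)]
    simp [L, Iic_erase]
  rw [hL, det_mul, hL_det, prod_filter_lt_eq_prod_prod_Iio (fun l k => v k - v l),
    div_eq_mul_inv, ← prod_inv_distrib]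

/-- The confluent (divided-difference) limit of a generalized Vandermonde-type
determinant: as all evaluation points tend to `a`, the ratio of
`det(f_i(α_j))` to the Vandermonde `∏_{i<j} (α_j - α_i)` tends to the
Wronskian-type determinant `det(f_i^{(j-1)}(a)) / ∏_j (j-1)!`. -/
theorem stmt_8 (n : ℕ) (f : Fin n → ℝ → ℝ) (a : ℝ)
    (hf : ∀ i, ContDiffAt ℝ (n - 1 : ℕ) (f i) a) :
    Tendsto
      (fun v : Fin n → ℝ =>
        Matrix.det (Matrix.of fun i j : Fin n => f i (v j))
          / ∏ p ∈ Finset.univ.filter (fun p : Fin n × Fin n => p.1 < p.2),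
              (v p.2 - v p.1))
      (nhdsWithin (fun _ => a) {v : Fin n → ℝ | Function.Injective v})
      (nhds (Matrix.det (Matrix.of fun i j : Fin n => iteratedDeriv j.val (f i) a)
        / ∏ j : Fin n, (Nat.factorial j.val : ℝ))) := by
  have hlim : Matrix.det (Matrix.of fun i j : Fin n => iteratedDeriv j.val (f i) a)
        / ∏ j : Fin n, (Nat.factorial j.val : ℝ)
      = Matrix.det (Matrix.of fun i k : Fin n => iteratedDeriv k (f i) a / k.val.factorial) := by
    rw [div_eq_inv_mul, ← prod_inv_distrib, ← Matrix.det_mul_row]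
    simp only [Matrix.of_apply, div_eq_inv_mul]
  simp_rw [Matrix.det_of_apply_div_prod_sub_eq_det_dividedDifference, hlim]
  have hentries (i k : Fin n) : Tendsto (fun v : Fin n → ℝ => dividedDifference (Iic k) v (f i))
      (nhdsWithin (fun _ => a) {v | Function.Injective v})
      (nhds (iteratedDeriv k (f i) a / k.val.factorial)) :=
    (tendsto_dividedDifference (Fin.card_Iic k) ((hf i).of_le (by exact_mod_cast (by omega))))
      |>.mono_left (nhdsWithin_mono _ fun v hv => hv.injOn)
  exact (continuous_id.matrix_det.tendsto _).comp
    (tendsto_pi_nhds.2 fun i => tendsto_pi_nhds.2 (hentries i))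
end

section
/- The determinantal formula for the continuum symplectic Schur function in one variable and the limit of symplectic Schur polynomials: for α ∈ ℝ and x ≥ 0, lim_{δ→0⁺} δ · e^{−αx + δα⌊x/δ⌋} · sp_{⌊x/δ⌋}(e^{δα}) = (e^{αx} − e^{−αx})/(2α), where sp_m(y) = (y^{m+1} − y^{−(m+1)})/(y − y^{−1}) is the symplectic Schur polynomial of Sp(2) with shape m ∈ ℕ. -/
/-!
Writing `y = e^t` turns the Weyl character into `sp_m(e^t) = sinh((m+1)t) / sinh t`. With `t = δα`
and `m = ⌊x/δ⌋`, the quantity `δ⌊x/δ⌋` lies in `(x - δ, x]`, so the prefactor tends to `1`, the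
numerator to `sinh(αx)`, and `δ / sinh(δα) → 1/α` because `sinh` has derivative `1` at `0`.
-/

open Filter Real

/-- The symplectic Schur polynomial of `Sp(2)` with shape `m`:
`sp_m(y) = (y^{m+1} − y^{−(m+1)})/(y − y⁻¹)`. -/
noncomputable def spSchur (m : ℤ) (y : ℝ) : ℝ :=
  (y ^ (m + 1) - y ^ (-(m + 1))) / (y - y⁻¹)

open Topology

lemma Real.exp_zpow (t : ℝ) (n : ℤ) : exp t ^ n = exp (n * t) := by
  rw [← Real.rpow_intCast, ← Real.exp_mul, mul_comm]

lemma spSchur_exp (m : ℤ) (t : ℝ) : spSchur m (exp t) = sinh ((m + 1) * t) / sinh t := by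
  rw [spSchur, Real.exp_zpow, Real.exp_zpow, ← Real.exp_neg, sinh_eq, sinh_eq]
  push_cast
  rw [neg_mul, div_div_div_cancel_right₀ two_ne_zero]

lemma tendsto_floor_div_mul_nhdsGT {k : Type*} [Field k] [LinearOrder k] [IsStrictOrderedRing k]
    [FloorRing k] [TopologicalSpace k] [OrderTopology k] (x : k) :
    Tendsto (fun δ : k => ⌊x / δ⌋ * δ) (𝓝[>] 0) (𝓝 x) := by
  have hlower : Tendsto (fun δ : k => x - δ) (𝓝[>] 0) (𝓝 x) := by
    simpa using (tendsto_const_nhds.sub tendsto_id).mono_left (nhdsWithin_le_nhds (a := (0 : k)))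
  refine tendsto_of_tendsto_of_tendsto_of_le_of_le' hlower tendsto_const_nhds ?_ ?_ <;>
    filter_upwards [self_mem_nhdsWithin] with δ (hδ : 0 < δ)
  · linarith [Int.sub_floor_div_mul_lt x hδ]
  · linarith [Int.sub_floor_div_mul_nonneg x hδ]

lemma tendsto_div_sinh_nhdsNE : Tendsto (fun t => t / sinh t) (𝓝[≠] 0) (𝓝 1) := by
  have hslope := hasDerivAt_iff_tendsto_slope_zero.mp (hasDerivAt_sinh 0)
  simpa [div_eq_inv_mul] using hslope.inv₀ (by simp)

lemma tendsto_div_sinh_mul_nhdsGT {α : ℝ} (hα : α ≠ 0) :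
    Tendsto (fun δ => δ / sinh (δ * α)) (𝓝[>] 0) (𝓝 α⁻¹) := by
  have hscale : Tendsto (fun δ : ℝ => δ * α) (𝓝[>] 0) (𝓝[≠] 0) := by
    refine tendsto_nhdsWithin_of_tendsto_nhds_of_eventually_within _ ?_ ?_
    · simpa using (tendsto_id.mul_const α).mono_left (nhdsWithin_le_nhds (a := (0 : ℝ)))
    · filter_upwards [self_mem_nhdsWithin] with δ (hδ : 0 < δ)
      exact mul_ne_zero hδ.ne' hα
  have := (tendsto_div_sinh_nhdsNE.comp hscale).const_mul α⁻¹
  rw [mul_one] at this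
  refine this.congr fun δ => ?_
  simp only [Function.comp_apply]
  field_simp

theorem stmt_16_general (α x : ℝ) :
    Tendsto
      (fun δ : ℝ =>
        δ * Real.exp (-(α * x) + δ * α * (⌊x / δ⌋ : ℝ)) *
          spSchur ⌊x / δ⌋ (Real.exp (δ * α)))
      (nhdsWithin 0 (Set.Ioi 0))
      (nhds ((Real.exp (α * x) - Real.exp (-(α * x))) / (2 * α))) := by
  rcases eq_or_ne α 0 with rfl | hα
  · -- both `sp_m(1)` and the right-hand side are the junk value `0 / 0 = 0`
    simp [spSchur]
  have hfloor := tendsto_floor_div_mul_nhdsGT x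
  have hprefactor : Tendsto (fun δ : ℝ => exp (α * (⌊x / δ⌋ * δ) - α * x)) (𝓝[>] 0) (𝓝 1) := by
    simpa using ((hfloor.const_mul α).sub_const (α * x)).rexp
  have hnumerator : Tendsto (fun δ : ℝ => sinh (α * (⌊x / δ⌋ * δ + δ))) (𝓝[>] 0)
      (𝓝 (sinh (α * x))) := by
    have hδ : Tendsto (fun δ : ℝ => δ) (𝓝[>] 0) (𝓝 0) := nhdsWithin_le_nhds
    simpa [Function.comp_def] using (continuous_sinh.tendsto _).comp ((hfloor.add hδ).const_mul α)
  have hlim := (hprefactor.mul hnumerator).mul (tendsto_div_sinh_mul_nhdsGT hα)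
  rw [one_mul, ← div_eq_mul_inv, sinh_eq, div_div] at hlim
  refine hlim.congr fun δ => ?_
  rw [spSchur_exp]
  ring_nf

/-- Zero-temperature scaling limit of symplectic Schur polynomials to the
continuum symplectic Schur function, `n = 1` case. -/
theorem stmt_16 (α x : ℝ) (hx : 0 ≤ x) :
    Tendsto
      (fun δ : ℝ =>
        δ * Real.exp (-(α * x) + δ * α * (⌊x / δ⌋ : ℝ)) *
          spSchur ⌊x / δ⌋ (Real.exp (δ * α)))
      (nhdsWithin 0 (Set.Ioi 0))
      (nhds ((Real.exp (α * x) - Real.exp (-(α * x))) / (2 * α))) :=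
  stmt_16_general α x
end

section
/- If X ∼ InverseGamma(εγ, 1) (i.e. 1/X follows the Gamma distribution with shape εγ and rate 1) for ε > 0, then ε log X converges in distribution, as ε → 0⁺, to an exponential random variable with rate γ > 0; equivalently, for every u > 0, P(ε log X ≤ u) = P(1/X ≥ e^{−u/ε}) → 1 − e^{−γu}. -/
/-!
On `[0, x]` the `Gamma(a, r)` density `r^a t^{a-1} e^{-rt} / Γ(a)` lies between `e^{-rx}`
and `1` times `r^a t^{a-1} / Γ(a)`, whose integral is `(rx)^a / Γ(a + 1)`; hence the CDF at
`x` is squeezed between `e^{-rx} (rx)^a / Γ(a + 1)` and `(rx)^a / Γ(a + 1)`. For `a = εγ`,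
`r = 1` and `x = e^{-u/ε}` the power `x^a = e^{-γu}` does not depend on `ε`, while `x → 0`
and `Γ(a + 1) → 1`, so the CDF tends to `e^{-γu}` and `P(1/X ≥ x)`, its complement (the law
has no atoms), tends to `1 - e^{-γu}`.
-/

open Filter MeasureTheory ProbabilityTheory Real
open Set Topology

namespace ProbabilityTheory

variable {a r : ℝ}

instance nullSingletonClass_gammaMeasure (a r : ℝ) : NullSingletonClass (gammaMeasure a r) :=
  nullSingletonClass_withDensity _

lemma gammaPDFReal_of_nonneg {x : ℝ} (hx : 0 ≤ x) :
    gammaPDFReal a r x = r ^ a / Gamma a * x ^ (a - 1) * exp (-(r * x)) :=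
  if_pos hx

lemma integrable_gammaPDFReal (ha : 0 < a) (hr : 0 < r) : Integrable (gammaPDFReal a r) := by
  refine ⟨(measurable_gammaPDFReal a r).aestronglyMeasurable, ?_⟩
  rw [hasFiniteIntegral_iff_ofReal (ae_of_all _ (gammaPDFReal_nonneg ha hr))]
  exact (lintegral_gammaPDF_eq_one ha hr).trans_lt ENNReal.one_lt_top

lemma cdf_gammaMeasure_eq_intervalIntegral (ha : 0 < a) (hr : 0 < r) {x : ℝ} (hx : 0 ≤ x) :
    cdf (gammaMeasure a r) x = ∫ t in 0..x, gammaPDFReal a r t := by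
  rw [cdf_gammaMeasure_eq_integral ha hr, intervalIntegral.integral_of_le hx,
    ← integral_Icc_eq_integral_Ioc, setIntegral_eq_of_subset_of_forall_sdiff_eq_zero
      measurableSet_Iic Icc_subset_Iic_self]
  rintro t ⟨htx, ht⟩
  exact if_neg fun h ↦ ht ⟨h, htx⟩

lemma integral_rpow_div_Gamma_mul_rpow_sub_one (ha : 0 < a) (hr : 0 ≤ r) {x : ℝ}
    (hx : 0 ≤ x) :
    ∫ t in 0..x, r ^ a / Gamma a * t ^ (a - 1) = (r * x) ^ a / Gamma (a + 1) := by
  rw [intervalIntegral.integral_const_mul, integral_rpow (Or.inl (by linarith)), sub_add_cancel,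
    zero_rpow ha.ne', sub_zero, mul_rpow hr hx, Gamma_add_one ha.ne']
  field_simp

lemma exp_neg_mul_rpow_div_Gamma_le_cdf_gammaMeasure (ha : 0 < a) (hr : 0 < r) {x : ℝ}
    (hx : 0 ≤ x) : exp (-(r * x)) * (r * x) ^ a / Gamma (a + 1) ≤ cdf (gammaMeasure a r) x := by
  rw [mul_div_assoc, ← integral_rpow_div_Gamma_mul_rpow_sub_one ha hr.le hx,
    ← intervalIntegral.integral_const_mul, cdf_gammaMeasure_eq_intervalIntegral ha hr hx]
  refine intervalIntegral.integral_mono_on hx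
    (((intervalIntegral.intervalIntegrable_rpow' (by linarith)).const_mul _).const_mul _)
    (integrable_gammaPDFReal ha hr).intervalIntegrable fun t ⟨ht0, htx⟩ ↦ ?_
  have := Gamma_pos_of_pos ha
  rw [gammaPDFReal_of_nonneg ht0, mul_comm]
  gcongr

lemma cdf_gammaMeasure_le_rpow_div_Gamma (ha : 0 < a) (hr : 0 < r) {x : ℝ} (hx : 0 ≤ x) :
    cdf (gammaMeasure a r) x ≤ (r * x) ^ a / Gamma (a + 1) := by
  rw [← integral_rpow_div_Gamma_mul_rpow_sub_one ha hr.le hx,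
    cdf_gammaMeasure_eq_intervalIntegral ha hr hx]
  refine intervalIntegral.integral_mono_on hx (integrable_gammaPDFReal ha hr).intervalIntegrable
    ((intervalIntegral.intervalIntegrable_rpow' (by linarith)).const_mul _)
    fun t ⟨ht0, _⟩ ↦ ?_
  have := Gamma_pos_of_pos ha
  rw [gammaPDFReal_of_nonneg ht0]
  exact mul_le_of_le_one_right (by positivity)
    (exp_le_one_iff.mpr (neg_nonpos.mpr (by positivity)))

lemma measureReal_Ici_eq_one_sub_cdf (μ : Measure ℝ) [IsProbabilityMeasure μ]
    [NullSingletonClass μ] (x : ℝ) : μ.real (Ici x) = 1 - cdf μ x := by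
  rw [← measureReal_congr Ioi_ae_eq_Ici, ← compl_Iic, measureReal_compl measurableSet_Iic,
    probReal_univ, cdf_eq_real]

lemma tendsto_Gamma_add_one_nhds_zero {ι : Type*} {l : Filter ι} {a : ι → ℝ}
    (ha : Tendsto a l (𝓝 0)) : Tendsto (fun i ↦ Gamma (a i + 1)) l (𝓝 1) := by
  have hΓ : ContinuousAt Gamma 1 :=
    differentiableOn_Gamma_Ioi.continuousOn.continuousAt (Ioi_mem_nhds one_pos)
  have h1 : Tendsto (a · + 1) l (𝓝 1) := by simpa using ha.add_const 1
  have := hΓ.tendsto.comp h1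
  rwa [Gamma_one] at this

theorem tendsto_cdf_gammaMeasure_of_tendsto_rpow {ι : Type*} {l : Filter ι} {a x : ι → ℝ}
    {L : ℝ} (hr : 0 < r) (ha_pos : ∀ᶠ i in l, 0 < a i) (hx_nonneg : ∀ᶠ i in l, 0 ≤ x i)
    (ha : Tendsto a l (𝓝 0)) (hx : Tendsto x l (𝓝 0))
    (hax : Tendsto (fun i ↦ (r * x i) ^ a i) l (𝓝 L)) :
    Tendsto (fun i ↦ cdf (gammaMeasure (a i) r) (x i)) l (𝓝 L) := by
  have hΓ := tendsto_Gamma_add_one_nhds_zero ha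
  have hexp : Tendsto (fun i ↦ exp (-(r * x i))) l (𝓝 1) :=
    tendsto_exp_nhds_zero_nhds_one.comp (by simpa using (hx.const_mul r).neg)
  refine tendsto_of_tendsto_of_tendsto_of_le_of_le'
    (by simpa using (hexp.mul hax).div hΓ one_ne_zero) (by simpa using hax.div hΓ one_ne_zero)
    ?_ ?_
  · filter_upwards [ha_pos, hx_nonneg] with i hai hxi
    exact exp_neg_mul_rpow_div_Gamma_le_cdf_gammaMeasure hai hr hxi
  · filter_upwards [ha_pos, hx_nonneg] with i hai hxi
    exact cdf_gammaMeasure_le_rpow_div_Gamma hai hr hxi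

end ProbabilityTheory

lemma tendsto_exp_neg_div_nhdsGT_zero {u : ℝ} (hu : 0 < u) :
    Tendsto (fun ε ↦ exp (-u / ε)) (𝓝[>] 0) (𝓝 0) := by
  have h : Tendsto (fun ε ↦ -u / ε) (𝓝[>] 0) atBot := by
    simp_rw [neg_div, tendsto_neg_atBot_iff]
    exact tendsto_inv_nhdsGT_zero.const_mul_atTop hu
  exact tendsto_exp_comp_nhds_zero.mpr h

/-- Zero-temperature limit of the inverse-gamma distribution: if
`1/X ∼ Gamma(εγ, 1)`, then `ε log X` converges in distribution to `Exp(γ)`;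
equivalently, for every `u > 0`,
`P(1/X ≥ e^{−u/ε}) → 1 − e^{−γu}` as `ε → 0⁺`. -/
theorem stmt_17 (γ u : ℝ) (hγ : 0 < γ) (hu : 0 < u) :
    Tendsto
      (fun ε : ℝ =>
        (gammaMeasure (ε * γ) 1 (Set.Ici (Real.exp (-u / ε)))).toReal)
      (nhdsWithin 0 (Set.Ioi 0))
      (nhds (1 - Real.exp (-(γ * u)))) := by
  have hcdf : Tendsto (fun ε ↦ cdf (gammaMeasure (ε * γ) 1) (exp (-u / ε))) (𝓝[>] 0)
      (𝓝 (exp (-(γ * u)))) := by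
    refine tendsto_cdf_gammaMeasure_of_tendsto_rpow one_pos ?_ (.of_forall fun _ ↦ (exp_pos _).le)
      ?_ (tendsto_exp_neg_div_nhdsGT_zero hu) ?_
    · filter_upwards [self_mem_nhdsWithin] with ε hε using mul_pos hε hγ
    · simpa using ((continuous_mul_const γ).tendsto 0).mono_left nhdsWithin_le_nhds
    · refine tendsto_const_nhds.congr' ?_
      filter_upwards [self_mem_nhdsWithin] with ε (hε : 0 < ε)
      rw [one_mul, ← exp_mul]
      field_simp
  refine (tendsto_const_nhds.sub hcdf).congr' ?_
  filter_upwards [self_mem_nhdsWithin] with ε (hε : 0 < ε)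
  have := isProbabilityMeasure_gammaMeasure (mul_pos hε hγ) one_pos
  exact (measureReal_Ici_eq_one_sub_cdf _ _).symm
end
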